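/- Let N ≥ 2 and let x ∈ ℂ^N satisfy x[n] ≠ 0 for all n = 2,…,N−1. Then the system of 4N−4 linear equations trace(φ_{m,n} φ_{m,n}* · X) = |⟨x, φ_{m,n}⟩|² (m = 1,…,4; n = 1,…,N−1) has a unique solution in the cone of Hermitian positive semidefinite N×N matrices, namely X = x x*. (Corollary 1, part Φ: exact recovery of x, up to a unimodular constant, by the PhaseLift semidefinite program from the 4N−4 deterministic Φ-measurements.) -/

import Mathlib

open Complex Matrix MeasureTheory

noncomputable section

/-- α = √((1 − 1/√3)/2) -/
def alph : ℂ := (Real.sqrt ((1 - 1/Real.sqrt 3)/2) : ℝ)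

/-- β = e^{i5π/4}·√((1 + 1/√3)/2) -/
def beta : ℂ := Complex.exp (Complex.I * (5 * (Real.pi : ℂ) / 4)) *
  (Real.sqrt ((1 + 1/Real.sqrt 3)/2) : ℝ)

/-- the four frame vectors a₁ = (α,β), a₂ = (β,α), a₃ = (α,−β), a₄ = (−β,α) in ℂ² -/
def coef : Fin 4 → Fin 2 → ℂ := ![![alph, beta], ![beta, alph], ![alph, -beta], ![-beta, alph]]

/-- inner product ⟨x,y⟩ = Σ x[n]·conj(y[n]) -/
def inn {N : ℕ} (x y : Fin N → ℂ) : ℂ := ∑ i, x i * (starRingEnd ℂ) (y i)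

/-- Euclidean norm ‖x‖ = √⟨x,x⟩ -/
def nrm {N : ℕ} (x : Fin N → ℂ) : ℝ := Real.sqrt (inn x x).re

/-- outer product x y* -/
def outer {N : ℕ} (x y : Fin N → ℂ) : Matrix (Fin N) (Fin N) ℂ :=
  fun i j => x i * (starRingEnd ℂ) (y j)

/-- measurement vectors φ_{m,n} (0-based n: nonzero entries at positions n and n+1) -/
def phiv (N : ℕ) (m : Fin 4) (n : ℕ) : Fin N → ℂ :=
  fun i => if (i : ℕ) = n then coef m 0 else if (i : ℕ) = n + 1 then coef m 1 else 0

/-- measurement vectors ψ_{m,n} (0-based n: nonzero entries at positions 0 and n+1) -/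
def psiv (N : ℕ) (m : Fin 4) (n : ℕ) : Fin N → ℂ :=
  fun i => if (i : ℕ) = 0 then coef m 0 else if (i : ℕ) = n + 1 then coef m 1 else 0

/-- Hilbert–Schmidt inner product ⟨X,Y⟩ = trace(Y*X) -/
def hs {N : ℕ} (X Y : Matrix (Fin N) (Fin N) ℂ) : ℂ := Matrix.trace (Yᴴ * X)

/-- Frobenius (Hilbert–Schmidt) norm -/
def frob {N : ℕ} (X : Matrix (Fin N) (Fin N) ℂ) : ℝ := Real.sqrt (Matrix.trace (Xᴴ * X)).re

/-- spectral norm (largest singular value) -/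
def specNorm {N : ℕ} (A : Matrix (Fin N) (Fin N) ℂ) : ℝ :=
  sSup {r : ℝ | ∃ v : Fin N → ℂ, nrm v ≤ 1 ∧ r = nrm (A.mulVec v)}
open scoped ComplexOrder

/-!
Each measurement φ_{m,n} only sees the 2 × 2 block of `X` on the indices `n, n+1`, and the four
vectors `(α, β), (β, α), (α, -β), (-β, α)` are such that their rank-one matrices span all 2 × 2
matrices; so the measurements pin down the tridiagonal band of `X`, which therefore agrees with
the band of `x x*`. Positive semidefiniteness propagates this off the band: when a 2 × 2 principal
block of `X` equals that of `x x*`, the vector `conj (x b) e_a - conj (x a) e_b` is isotropic for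
`X`, hence in its kernel, so columns `a` and `b` of `X` are proportional. Walking along the
diagonal, with `x` nonzero at the interior indices, gives `X = x x*`.
-/

lemma trace_outer_mul {N : ℕ} (φ : Fin N → ℂ) (X : Matrix (Fin N) (Fin N) ℂ) :
    trace (outer φ φ * X) = ∑ i, ∑ j, φ i * starRingEnd ℂ (φ j) * X j i := by
  simp only [trace, diag, mul_apply, outer]

lemma trace_outer_mul_outer_self {N : ℕ} (φ x : Fin N → ℂ) :
    trace (outer φ φ * outer x x) = ((‖inn x φ‖ ^ 2 : ℝ) : ℂ) := by
  have hconj : starRingEnd ℂ (inn x φ) = ∑ i, starRingEnd ℂ (x i) * φ i := by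
    simp [inn, map_sum, mul_comm]
  rw [Complex.ofReal_pow, ← Complex.mul_conj', hconj, inn, Finset.sum_mul_sum, trace_outer_mul]
  simp only [outer]
  rw [Finset.sum_comm]
  exact Finset.sum_congr rfl fun _ _ => Finset.sum_congr rfl fun _ _ => by ring

lemma trace_outer_extend_mul {M N : ℕ} {e : Fin M → Fin N} (he : Function.Injective e)
    (w : Fin M → ℂ) (X : Matrix (Fin N) (Fin N) ℂ) :
    trace (outer (Function.extend e w 0) (Function.extend e w 0) * X)
      = trace (outer w w * X.submatrix e e) := by
  have extend_eq_zero : ∀ i ∉ Set.range e, Function.extend e w 0 i = 0 :=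
    fun i hi => Function.extend_apply' _ _ _ hi
  rw [trace_outer_mul, trace_outer_mul]
  refine (Fintype.sum_of_injective e he _ _ (fun i hi => ?_) fun k => ?_).symm
  · simp [extend_eq_zero i hi]
  · refine Fintype.sum_of_injective e he _ _ (fun j hj => ?_) fun l => ?_
    · simp [extend_eq_zero j hj]
    · simp [he.extend_apply]

def frame (a b : ℂ) : Fin 4 → Fin 2 → ℂ := ![![a, b], ![b, a], ![a, -b], ![-b, a]]

lemma coef_eq_frame : coef = frame alph beta := rfl

lemma frame_ext {a b : ℂ} (hnorm : ‖a‖ ≠ ‖b‖)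
    (hcross : (a * starRingEnd ℂ b) ^ 2 ≠ (starRingEnd ℂ a * b) ^ 2)
    {X Y : Matrix (Fin 2) (Fin 2) ℂ}
    (h : ∀ m, trace (outer (frame a b m) (frame a b m) * X)
      = trace (outer (frame a b m) (frame a b m) * Y)) : X = Y := by
  have hdiag : (a * starRingEnd ℂ a) ^ 2 - (b * starRingEnd ℂ b) ^ 2 ≠ 0 := by
    rw [Complex.mul_conj', Complex.mul_conj', sub_ne_zero, ← pow_mul, ← pow_mul]
    exact_mod_cast fun h =>
      hnorm ((pow_left_inj₀ (norm_nonneg a) (norm_nonneg b) (by norm_num)).1 h)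
  have hoff : (a * starRingEnd ℂ b) ^ 2 - (starRingEnd ℂ a * b) ^ 2 ≠ 0 := sub_ne_zero.2 hcross
  have h0 := h 0; have h1 := h 1; have h2 := h 2; have h3 := h 3
  simp only [frame, Fin.isValue, cons_val_zero, trace_outer_mul, Fin.sum_univ_two, cons_val_one,
    cons_val_fin_one, cons_val, map_neg, mul_neg, neg_mul, neg_neg] at h0 h1 h2 h3
  -- `h 0 ± h 2` and `h 1 ± h 3` decouple the diagonal entries from the off-diagonal ones.
  ext i j
  fin_cases i <;> fin_cases j <;> simp only [Fin.zero_eta, Fin.mk_one] <;> rw [← sub_eq_zero]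
  · refine (mul_eq_zero.1 ?_).resolve_left (mul_ne_zero two_ne_zero hdiag)
    linear_combination a * starRingEnd ℂ a * (h0 + h2) - b * starRingEnd ℂ b * (h1 + h3)
  · refine (mul_eq_zero.1 ?_).resolve_left (mul_ne_zero two_ne_zero (neg_ne_zero.2 hoff))
    linear_combination starRingEnd ℂ a * b * (h0 - h2) - a * starRingEnd ℂ b * (h1 - h3)
  · refine (mul_eq_zero.1 ?_).resolve_left (mul_ne_zero two_ne_zero hoff)
    linear_combination a * starRingEnd ℂ b * (h0 - h2) - starRingEnd ℂ a * b * (h1 - h3)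
  · refine (mul_eq_zero.1 ?_).resolve_left (mul_ne_zero two_ne_zero (neg_ne_zero.2 hdiag))
    linear_combination b * starRingEnd ℂ b * (h0 + h2) - a * starRingEnd ℂ a * (h1 + h3)

lemma one_div_sqrt_three_lt_one : 1 / Real.sqrt 3 < 1 :=
  (div_lt_one (by positivity)).2 (by rw [Real.lt_sqrt zero_le_one]; norm_num)

lemma alph_ne_zero : alph ≠ 0 :=
  Complex.ofReal_ne_zero.2 (Real.sqrt_pos.2 (by linarith [one_div_sqrt_three_lt_one])).ne'

lemma norm_alph_lt_norm_beta : ‖alph‖ < ‖beta‖ := by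
  have hexp : ‖Complex.exp (Complex.I * (5 * (Real.pi : ℂ) / 4))‖ = 1 := by
    simp [Complex.norm_exp]
  rw [alph, beta, norm_mul, hexp, one_mul, Complex.norm_real, Complex.norm_real,
    Real.norm_of_nonneg (Real.sqrt_nonneg _), Real.norm_of_nonneg (Real.sqrt_nonneg _)]
  have hpos : 0 < 1 / Real.sqrt 3 := by positivity
  exact Real.sqrt_lt_sqrt (by linarith [one_div_sqrt_three_lt_one]) (by linarith)

lemma exp_five_pi_div_four_sq :
    Complex.exp (Complex.I * (5 * (Real.pi : ℂ) / 4)) ^ 2 = Complex.I := by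
  rw [← Complex.exp_nat_mul, show ((2 : ℕ) : ℂ) * (Complex.I * (5 * Real.pi / 4))
    = Real.pi / 2 * Complex.I + 2 * Real.pi * Complex.I by push_cast; ring,
    Complex.exp_add, Complex.exp_two_pi_mul_I, mul_one, Complex.exp_mul_I,
    Complex.cos_pi_div_two, Complex.sin_pi_div_two]
  ring

lemma sq_alph_mul_conj_beta_ne :
    (alph * starRingEnd ℂ beta) ^ 2 ≠ (starRingEnd ℂ alph * beta) ^ 2 := by
  set B : ℝ := (1 + 1 / Real.sqrt 3) / 2
  have hB : 0 < B := by positivity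
  have hβ : beta ^ 2 = Complex.I * B := by
    rw [beta, mul_pow, exp_five_pi_div_four_sq, ← Complex.ofReal_pow, Real.sq_sqrt hB.le]
  rw [show starRingEnd ℂ alph = alph from Complex.conj_ofReal _, mul_pow, mul_pow, ← map_pow, hβ,
    Ne, mul_right_inj' (pow_ne_zero 2 alph_ne_zero), map_mul, Complex.conj_I, Complex.conj_ofReal]
  intro h
  have : (B : ℂ) = 0 := by linear_combination Complex.I / 2 * h + (B : ℂ) * Complex.I_sq
  exact hB.ne' (Complex.ofReal_eq_zero.1 this)

lemma phiv_eq_extend {N : ℕ} {a b : Fin N} (hab : (b : ℕ) = a + 1) (m : Fin 4) :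
    phiv N m a = Function.extend ![a, b] (coef m) 0 := by
  have he : Function.Injective ![a, b] := injective_pair_iff_ne.2 fun h => by simp [h] at hab
  funext i
  by_cases hia : i = a
  · subst hia
    simpa [phiv] using (he.extend_apply (coef m) 0 0).symm
  by_cases hib : i = b
  · subst hib
    simpa [phiv, hab, hia] using (he.extend_apply (coef m) 0 1).symm
  rw [Function.extend_apply']
  · simp [phiv, Fin.val_inj, hia, ← hab, hib]
  · rintro ⟨k, rfl⟩
    fin_cases k <;> simp_all

lemma Matrix.apply_eq_of_forall_submatrix_pair_eq {α : Type*} {N : ℕ} (hN : 2 ≤ N)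
    {A B : Matrix (Fin N) (Fin N) α}
    (h : ∀ a b : Fin N, (b : ℕ) = a + 1 → A.submatrix ![a, b] ![a, b] = B.submatrix ![a, b] ![a, b])
    (i j : Fin N) (hij : (i : ℕ) ≤ j + 1) (hji : (j : ℕ) ≤ i + 1) : A i j = B i j := by
  obtain ⟨a, b, hab, p, q, rfl, rfl⟩ :
      ∃ a b : Fin N, (b : ℕ) = a + 1 ∧ ∃ p q : Fin 2, ![a, b] p = i ∧ ![a, b] q = j := by
    have hi := i.isLt
    rcases (show (j : ℕ) = i + 1 ∨ (i : ℕ) = j + 1 ∨ i = j by omega) with h | h | rfl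
    · exact ⟨i, j, h, 0, 1, rfl, rfl⟩
    · exact ⟨j, i, h, 1, 0, rfl, rfl⟩
    by_cases hlast : (i : ℕ) + 1 < N
    · exact ⟨i, ⟨i + 1, hlast⟩, rfl, 0, 0, rfl, rfl⟩
    · exact ⟨⟨i - 1, by omega⟩, i, by simp; omega, 1, 1, rfl, rfl⟩
  exact congrFun₂ (h a b hab) p q

lemma Matrix.PosSemidef.conj_mul_apply_eq_of_pair {N : ℕ} {X : Matrix (Fin N) (Fin N) ℂ}
    (hX : X.PosSemidef) {y : Fin N → ℂ} {a b : Fin N}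
    (haa : X a a = outer y y a a) (hab : X a b = outer y y a b)
    (hba : X b a = outer y y b a) (hbb : X b b = outer y y b b) (c : Fin N) :
    starRingEnd ℂ (y b) * X c a = starRingEnd ℂ (y a) * X c b := by
  set v : Fin N → ℂ := Pi.single a (starRingEnd ℂ (y b)) - Pi.single b (starRingEnd ℂ (y a))
  have hXv : ∀ i, (X *ᵥ v) i = starRingEnd ℂ (y b) * X i a - starRingEnd ℂ (y a) * X i b := by
    intro i
    simp [v, Matrix.mulVec_sub, Matrix.mulVec_single, mul_comm]
  have hv : star v ⬝ᵥ X *ᵥ v = 0 := by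
    rw [star_sub, ← Pi.single_star, ← Pi.single_star, sub_dotProduct, single_dotProduct,
      single_dotProduct, hXv, hXv, haa, hab, hba, hbb]
    simp only [outer, star_def, Complex.conj_conj]
    ring
  have := congrFun ((hX.dotProduct_mulVec_zero_iff v).1 hv) c
  rwa [hXv, Pi.zero_apply, sub_eq_zero] at this

theorem Matrix.PosSemidef.eq_outer_of_tridiagonal {N : ℕ} {X : Matrix (Fin N) (Fin N) ℂ}
    (hX : X.PosSemidef) {y : Fin N → ℂ} (hy : ∀ i : Fin N, 0 < (i : ℕ) → (i : ℕ) < N - 1 → y i ≠ 0)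
    (hband : ∀ i j : Fin N, (i : ℕ) ≤ j + 1 → (j : ℕ) ≤ i + 1 → X i j = outer y y i j) :
    X = outer y y := by
  have step (a b c : Fin N) (hb : (b : ℕ) = a + 1) (hyb : y b ≠ 0)
      (hcb : X c b = outer y y c b) : X c a = outer y y c a := by
    have key := hX.conj_mul_apply_eq_of_pair (hband a a (by omega) (by omega))
      (hband a b (by omega) (by omega)) (hband b a (by omega) (by omega))
      (hband b b (by omega) (by omega)) c
    rw [hcb] at key
    simp only [outer] at key ⊢
    refine mul_left_cancel₀ ((map_ne_zero (starRingEnd ℂ)).2 hyb) ?_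
    linear_combination key
  have lower (k : ℕ) (hk : 1 ≤ k) : ∀ a c : Fin N, (a : ℕ) + k = c → X c a = outer y y c a := by
    induction k, hk using Nat.le_induction with
    | base => exact fun a c h => hband c a (by omega) (by omega)
    | succ k hk ih =>
      intro a c h
      have hc := c.isLt
      let b : Fin N := ⟨a + 1, by omega⟩
      exact step a b c rfl (hy b (by simp [b]) (by simp [b]; omega)) (ih b c (by simp [b]; omega))
  ext i j
  by_cases hji : (j : ℕ) + 1 < i
  · exact lower (i - j) (by omega) j i (by omega)
  by_cases hij : (i : ℕ) + 1 < j
  · rw [← hX.isHermitian.apply, lower (j - i) (by omega) i j (by omega)]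
    simp [outer, mul_comm]
  exact hband i j (by omega) (by omega)

/-- Corollary 1 (part Φ): for x ∈ S_Φ, X = xx* is the unique Hermitian PSD solution
of the 4N−4 linear equations trace(φ_{m,n} φ_{m,n}*·X) = |⟨x,φ_{m,n}⟩|². -/
theorem phaselift_unique_Phi (N : ℕ) (hN : 2 ≤ N) (x : Fin N → ℂ)
    (hx : ∀ i : Fin N, 0 < (i : ℕ) → (i : ℕ) < N - 1 → x i ≠ 0) :
    ((outer x x).PosSemidef ∧
      ∀ (m : Fin 4) (n : ℕ), n + 1 < N →
        Matrix.trace (outer (phiv N m n) (phiv N m n) * outer x x)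
          = ((‖inn x (phiv N m n)‖ ^ 2 : ℝ) : ℂ)) ∧
    (∀ X : Matrix (Fin N) (Fin N) ℂ, X.PosSemidef →
      (∀ (m : Fin 4) (n : ℕ), n + 1 < N →
        Matrix.trace (outer (phiv N m n) (phiv N m n) * X)
          = ((‖inn x (phiv N m n)‖ ^ 2 : ℝ) : ℂ)) →
      X = outer x x) := by
  refine ⟨⟨posSemidef_vecMulVec_self_star x, fun m n _ => trace_outer_mul_outer_self _ _⟩,
    fun X hX hmeas => hX.eq_outer_of_tridiagonal hx (apply_eq_of_forall_submatrix_pair_eq hN ?_)⟩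
  intro a b hab
  have he : Function.Injective ![a, b] := injective_pair_iff_ne.2 fun h => by simp [h] at hab
  refine frame_ext norm_alph_lt_norm_beta.ne sq_alph_mul_conj_beta_ne fun m => ?_
  rw [← trace_outer_extend_mul he, ← trace_outer_extend_mul he, ← coef_eq_frame,
    ← phiv_eq_extend hab, hmeas m a (by omega), trace_outer_mul_outer_self]
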